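/- For right R-modules M₁, …, Mₙ, SG.dim(M₁ ⊕ ⋯ ⊕ Mₙ) = SG.dim M₁ + ⋯ + SG.dim Mₙ. -/

import Mathlib

open Function Finset

set_option maxHeartbeats 1000000

/-- Goldie (uniform) dimension: supremum of the number of independent nonzero submodules. -/
noncomputable def goldieDim (R M : Type*) [Ring R] [AddCommGroup M] [Module R M] : ℕ∞ :=
  ⨆ (n : ℕ) (_ : ∃ f : Fin n → Submodule R M, (∀ i, f i ≠ ⊥) ∧ iSupIndep f), (n : ℕ∞)

/-- Strong Goldie dimension: supremum of Goldie dimensions of all quotients. -/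
noncomputable def sgoldieDim (R M : Type*) [Ring R] [AddCommGroup M] [Module R M] : ℕ∞ :=
  ⨆ K : Submodule R M, goldieDim R (M ⧸ K)


section Helpers
variable {R : Type*} [Ring R] {M : Type*} [AddCommGroup M] [Module R M]

lemma mem_iSup_fintype_sum {ι : Type*} [Fintype ι]
    (p : ι → Submodule R M) {x : M} (hx : x ∈ ⨆ i, p i) :
    ∃ w : ι → M, (∀ i, w i ∈ p i) ∧ ∑ i, w i = x := by
  obtain ⟨f, hf, hsum⟩ := (Submodule.mem_iSup_iff_exists_finsupp p x).1 hx
  refine ⟨fun i => f i, hf, ?_⟩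
  rwa [Finsupp.sum_fintype] at hsum
  intro i; rfl

lemma mem_biSup_sum {ι : Type*} [Fintype ι] {pred : ι → Prop}
    (p : ι → Submodule R M) {x : M} (hx : x ∈ ⨆ i, ⨆ (_ : pred i), p i) :
    ∃ w : ι → M, (∀ i, w i ∈ p i) ∧ (∀ i, ¬ pred i → w i = 0) ∧ ∑ i, w i = x := by
  classical
  obtain ⟨w, hw, hsum⟩ := mem_iSup_fintype_sum (fun i => ⨆ (_ : pred i), p i) hx
  refine ⟨w, fun i => ?_, fun i hi => ?_, hsum⟩
  · by_cases h : pred i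
    · have := hw i; rwa [iSup_pos h] at this
    · have := hw i; rw [iSup_neg h] at this
      simp only [Submodule.mem_bot] at this
      rw [this]; exact zero_mem _
  · have := hw i; rw [iSup_neg hi] at this
    simpa using this

lemma sum_mem_biSup_ne {ι : Type*} [Fintype ι] {p : ι → Submodule R M}
    {w : ι → M} (hw : ∀ j, w j ∈ p j) (i : ι) (hi : w i = 0) :
    ∑ j, w j ∈ ⨆ (j) (_ : j ≠ i), p j := by
  classical
  refine Submodule.sum_mem _ fun j _ => ?_
  by_cases h : j = i
  · subst h; rw [hi]; exact zero_mem _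
  · exact le_iSup₂ (f := fun (j : ι) (_ : j ≠ i) => p j) j h (hw j)

lemma indep_sum_eq_zero {ι : Type*} [Fintype ι] {p : ι → Submodule R M}
    (hp : iSupIndep p) {w : ι → M} (hw : ∀ i, w i ∈ p i) (hsum : ∑ i, w i = 0) :
    ∀ i, w i = 0 := by
  classical
  intro i
  have h2 : w i - ∑ j, w j ∈ ⨆ (j) (_ : j ≠ i), p j := by
    have : w i - ∑ j, w j = -∑ j ∈ univ.erase i, w j := by
      rw [← Finset.add_sum_erase univ w (Finset.mem_univ i)]; abel
    rw [this]
    exact neg_mem (Submodule.sum_mem _ fun j hj =>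
      le_iSup₂ (f := fun (j : ι) (_ : j ≠ i) => p j) j (Finset.mem_erase.1 hj).1 (hw j))
  rw [hsum, sub_zero] at h2
  exact (Submodule.disjoint_def.1 (iSupIndep_def.1 hp i)) _ (hw i) h2

end Helpers

section GDbasic
variable {R : Type*} [Ring R] {M : Type*} [AddCommGroup M] [Module R M]

lemma le_goldieDim_of_fam {ι : Type*} [Fintype ι] (f : ι → Submodule R M)
    (h0 : ∀ i, f i ≠ ⊥) (hind : iSupIndep f) :
    (Fintype.card ι : ℕ∞) ≤ goldieDim R M := by
  refine le_iSup_of_le (Fintype.card ι) ?_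
  refine le_iSup_of_le ?_ le_rfl
  exact ⟨f ∘ (Fintype.equivFin ι).symm, fun i => h0 _,
    hind.comp (Fintype.equivFin ι).symm.injective⟩

lemma goldieDim_le (c : ℕ∞)
    (h : ∀ (n : ℕ) (f : Fin n → Submodule R M), (∀ i, f i ≠ ⊥) → iSupIndep f → (n : ℕ∞) ≤ c) :
    goldieDim R M ≤ c := by
  refine iSup_le fun n => iSup_le fun hn => ?_
  obtain ⟨f, h0, hind⟩ := hn
  exact h n f h0 hind

end GDbasic

section Key
variable {R : Type*} [Ring R] {X : Type*} [AddCommGroup X] [Module R X]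

lemma goldieDim_le_add_quot (A : Submodule R X) :
    goldieDim R X ≤ goldieDim R A + goldieDim R (X ⧸ A) := by
  classical
  refine goldieDim_le _ fun k f h0 hind => ?_
  suffices H : ∀ (m : ℕ) (f : Fin k → Submodule R X), (∀ i, f i ≠ ⊥) → iSupIndep f →
      (univ.filter fun i => ¬ f i ≤ A).card = m →
      (k : ℕ∞) ≤ goldieDim R A + goldieDim R (X ⧸ A) from H _ f h0 hind rfl
  intro m
  induction m using Nat.strong_induction_on with
  | _ m IH =>
  intro f h0 hind hcard
  by_cases hP : ∃ (c : Fin k → X), (∀ i, c i ∈ f i) ∧ (∀ i, f i ≤ A → c i = 0) ∧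
      (∑ i, c i) ∈ A ∧ (∑ i, c i) ≠ 0
  · -- surgery case
    have hQ : ∃ d, ∃ (c : Fin k → X), ((∀ i, c i ∈ f i) ∧ (∀ i, f i ≤ A → c i = 0) ∧
        (∑ i, c i) ∈ A ∧ (∑ i, c i) ≠ 0) ∧ (univ.filter fun i => c i ≠ 0).card = d := by
      obtain ⟨c, hc⟩ := hP
      exact ⟨_, c, hc, rfl⟩
    obtain ⟨c, ⟨hc1, hc2, hcA, hc0⟩, hd⟩ := Nat.find_spec hQ
    set a : X := ∑ i, c i with ha
    have hF : ∃ i₀, c i₀ ≠ 0 := by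
      by_contra h
      push_neg at h
      exact hc0 (Finset.sum_eq_zero fun i _ => h i)
    obtain ⟨i₀, hi₀⟩ := hF
    have hi₀F : i₀ ∈ univ.filter fun i => c i ≠ 0 := by simp [hi₀]
    have hfi₀ : ¬ f i₀ ≤ A := fun h => hi₀ (hc2 i₀ h)
    -- minimality tool
    have hmin : ∀ r : R, r • c i₀ = 0 → r • a = 0 := by
      intro r hr
      by_contra hra
      have hsum' : ∑ i, r • c i = r • a := by rw [← Finset.smul_sum]
      have hQ' : ∃ (c' : Fin k → X), ((∀ i, c' i ∈ f i) ∧ (∀ i, f i ≤ A → c' i = 0) ∧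
          (∑ i, c' i) ∈ A ∧ (∑ i, c' i) ≠ 0) ∧
          (univ.filter fun i => c' i ≠ 0).card = (univ.filter fun i => r • c i ≠ 0).card := by
        refine ⟨fun i => r • c i, ⟨fun i => Submodule.smul_mem _ _ (hc1 i),
          fun i h => ?_, ?_, ?_⟩, rfl⟩
        · show r • c i = 0
          rw [hc2 i h, smul_zero]
        · rw [hsum']; exact A.smul_mem r hcA
        · rw [hsum']; exact hra
      have hlt : (univ.filter fun i => r • c i ≠ 0).card < Nat.find hQ := by
        have hsub : (univ.filter fun i => r • c i ≠ 0) ⊆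
            (univ.filter fun i => c i ≠ 0).erase i₀ := by
          intro j hj
          simp only [mem_filter, mem_univ, true_and] at hj
          refine Finset.mem_erase.2 ⟨fun h => hj (h ▸ hr), ?_⟩
          simp only [mem_filter, mem_univ, true_and]
          intro h; exact hj (by rw [h, smul_zero])
        calc (univ.filter fun i => r • c i ≠ 0).card
            ≤ ((univ.filter fun i => c i ≠ 0).erase i₀).card := Finset.card_le_card hsub
          _ < (univ.filter fun i => c i ≠ 0).card := Finset.card_erase_lt_of_mem hi₀F
          _ = Nat.find hQ := hd
      exact Nat.find_min hQ hlt hQ'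
    -- the new family
    set f' : Fin k → Submodule R X := fun l => if l = i₀ then Submodule.span R {a} else f l
      with hf'
    have hf'i₀ : f' i₀ = Submodule.span R {a} := by simp [hf']
    have hf'ne : ∀ j, j ≠ i₀ → f' j = f j := fun j hj => by simp [hf', hj]
    have h0' : ∀ i, f' i ≠ ⊥ := by
      intro i
      by_cases hi : i = i₀
      · rw [hi, hf'i₀]
        simpa [Submodule.span_singleton_eq_bot] using hc0
      · rw [hf'ne i hi]; exact h0 i
    have hind' : iSupIndep f' := by
      rw [iSupIndep_def]
      intro i
      rw [Submodule.disjoint_def]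
      intro x hx1 hx2
      obtain ⟨w, hw, hw0, hwsum⟩ := mem_biSup_sum (pred := fun j => j ≠ i) f' hx2
      by_cases hii : i = i₀
      · rw [hii, hf'i₀] at hx1
        obtain ⟨r, rfl⟩ := Submodule.mem_span_singleton.1 hx1
        have hwi₀ : w i₀ = 0 := hw0 i₀ (by rw [hii]; exact not_not_intro rfl)
        have hv : ∀ j, r • c j - w j ∈ f j := by
          intro j
          by_cases hj : j = i₀
          · rw [hj, hwi₀, sub_zero]; exact Submodule.smul_mem _ r (hc1 i₀)
          · exact sub_mem (Submodule.smul_mem _ r (hc1 j))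
              (by have := hw j; rwa [hf'ne j hj] at this)
        have hvsum : ∑ j, (r • c j - w j) = 0 := by
          rw [Finset.sum_sub_distrib, hwsum, ← Finset.smul_sum, ← ha, sub_self]
        have hz := indep_sum_eq_zero hind hv hvsum i₀
        rw [hwi₀, sub_zero] at hz
        exact hmin r hz
      · have hxf : x ∈ f i := by rwa [hf'ne i hii] at hx1
        have hwi₀mem : w i₀ ∈ Submodule.span R {a} := by
          have := hw i₀; rwa [hf'i₀] at this
        obtain ⟨r, hwi₀⟩ := Submodule.mem_span_singleton.1 hwi₀mem
        -- hwi₀ : r • a = w i₀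
        have hww : ∀ j, j ≠ i₀ → w j ∈ f j := fun j hj => by
          have := hw j; rwa [hf'ne j hj] at this
        set v : Fin k → X :=
          fun j => r • c j + (if j = i₀ then 0 else w j) - (if j = i then x else 0) with hvdef
        have hv : ∀ j, v j ∈ f j := by
          intro j
          by_cases hj : j = i₀
          · have hji : j ≠ i := fun h => hii (h ▸ hj ▸ rfl : i = i₀)
            rw [hvdef]
            simp only [if_pos hj, if_neg hji, add_zero, sub_zero]
            exact Submodule.smul_mem _ r (hc1 j)
          · by_cases hji : j = i
            · rw [hvdef]
              simp only [if_neg hj, if_pos hji]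
              have hwj : w j = 0 := hw0 j (by rw [hji]; exact not_not_intro rfl)
              rw [hwj, add_zero, hji]
              exact sub_mem (Submodule.smul_mem _ r (hc1 i)) hxf
            · rw [hvdef]
              simp only [if_neg hj, if_neg hji]
              rw [sub_zero]
              exact add_mem (Submodule.smul_mem _ r (hc1 j)) (hww j hj)
        have hwsum' : ∑ j, (if j = i₀ then 0 else w j) = x - w i₀ := by
          have : ∀ j, (if j = i₀ then 0 else w j) = w j - (if j = i₀ then w i₀ else 0) := by
            intro j
            by_cases hj : j = i₀
            · rw [hj]; simp
            · simp [hj]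
          rw [Finset.sum_congr rfl fun j _ => this j, Finset.sum_sub_distrib, hwsum]
          congr 1
          simp [Finset.sum_ite_eq']
        have hvsum : ∑ j, v j = 0 := by
          rw [hvdef]
          rw [Finset.sum_sub_distrib, Finset.sum_add_distrib, hwsum', ← Finset.smul_sum, ← ha]
          rw [← hwi₀]
          simp [Finset.sum_ite_eq']
        have hz := indep_sum_eq_zero hind hv hvsum i₀
        have hz' : r • c i₀ = 0 := by
          have : v i₀ = r • c i₀ := by
            rw [hvdef]
            simp [if_neg (show i₀ ≠ i from fun h => hii h.symm)]
          rw [this] at hz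
          exact hz
        have hra : r • a = 0 := hmin r hz'
        have hwi₀' : w i₀ = 0 := by rw [← hwi₀, hra]
        have hwf : ∀ j, w j ∈ f j := by
          intro j
          by_cases hj : j = i₀
          · rw [hj, hwi₀']; exact zero_mem _
          · exact hww j hj
        have hxmem : x ∈ ⨆ (j) (_ : j ≠ i), f j := by
          rw [← hwsum]
          exact sum_mem_biSup_ne hwf i (hw0 i (not_not_intro rfl))
        exact (Submodule.disjoint_def.1 (iSupIndep_def.1 hind i)) x hxf hxmem
    -- the count went down
    have hfilter : (univ.filter fun i => ¬ f' i ≤ A)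
        = (univ.filter fun i => ¬ f i ≤ A).erase i₀ := by
      ext j
      simp only [mem_filter, mem_erase, mem_univ, true_and]
      by_cases hj : j = i₀
      · rw [hj, hf'i₀]
        simp [hj, (Submodule.span_singleton_le_iff_mem a A).2 hcA]
      · rw [hf'ne j hj]
        simp [hj]
    have hmem : i₀ ∈ univ.filter fun i => ¬ f i ≤ A := by simp [hfi₀]
    have hlt : (univ.filter fun i => ¬ f' i ≤ A).card < m := by
      rw [hfilter, ← hcard]
      exact Finset.card_erase_lt_of_mem hmem
    exact IH _ hlt f' h0' hind' rfl
  · -- direct count case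
    have Z : ∀ c : Fin k → X, (∀ i, c i ∈ f i) → (∀ i, f i ≤ A → c i = 0) →
        (∑ i, c i) ∈ A → ∑ i, c i = 0 := by
      intro c h1 h2 h3
      by_contra h4
      exact hP ⟨c, h1, h2, h3, h4⟩
    -- family inside A
    have hg0 : ∀ i : {i // f i ≤ A}, (f i.1).comap A.subtype ≠ ⊥ := by
      intro i
      obtain ⟨x, hx, hx0⟩ := (f i.1).ne_bot_iff.1 (h0 i.1)
      refine (Submodule.ne_bot_iff _).2 ⟨⟨x, i.2 hx⟩, hx, fun h => hx0 ?_⟩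
      exact congrArg Subtype.val h
    have hgind : iSupIndep (fun i : {i // f i ≤ A} => (f i.1).comap A.subtype) := by
      rw [iSupIndep_def]
      intro i
      rw [Submodule.disjoint_def]
      intro x hx1 hx2
      have hle : (⨆ (j : {i // f i ≤ A}) (_ : j ≠ i), (f j.1).comap A.subtype) ≤
          Submodule.comap A.subtype (⨆ (j : Fin k) (_ : j ≠ i.1), f j) := by
        refine iSup₂_le fun j hj => Submodule.comap_mono
          (le_iSup₂ (f := fun (l : Fin k) (_ : l ≠ i.1) => f l) j.1
            (fun h => hj (Subtype.ext h)))
      have h2 : (x : X) ∈ ⨆ (j : Fin k) (_ : j ≠ i.1), f j := hle hx2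
      have h1 : (x : X) ∈ f i.1 := hx1
      have := (Submodule.disjoint_def.1 (iSupIndep_def.1 hind i.1)) _ h1 h2
      exact Subtype.ext this
    -- family in the quotient
    have hh0 : ∀ i : {i // ¬ f i ≤ A}, (f i.1).map A.mkQ ≠ ⊥ := by
      intro i hbot
      refine i.2 fun x hx => ?_
      have : A.mkQ x ∈ (⊥ : Submodule R (X ⧸ A)) := hbot ▸ Submodule.mem_map_of_mem hx
      rw [Submodule.mem_bot] at this
      exact (Submodule.Quotient.mk_eq_zero A).1 (by rwa [Submodule.mkQ_apply] at this)
    have hhind : iSupIndep (fun i : {i // ¬ f i ≤ A} => (f i.1).map A.mkQ) := by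
      rw [iSupIndep_def]
      intro i
      rw [Submodule.disjoint_def]
      intro ξ hξ1 hξ2
      obtain ⟨x, hx, hξx⟩ := hξ1
      have heq : (⨆ (j : {i // ¬ f i ≤ A}) (_ : j ≠ i), (f j.1).map A.mkQ) =
          (⨆ (j : {i // ¬ f i ≤ A}) (_ : j ≠ i), f j.1).map A.mkQ := by
        rw [Submodule.map_iSup]
        exact iSup_congr fun j => (Submodule.map_iSup _ _).symm
      rw [heq] at hξ2
      obtain ⟨y, hy, hξy⟩ := hξ2
      have hxy : x - y ∈ A := by
        rw [← hξx] at hξy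
        have : Submodule.Quotient.mk (p := A) y = Submodule.Quotient.mk (p := A) x := by
          simpa [Submodule.mkQ_apply] using hξy
        exact (Submodule.Quotient.eq A).1 this.symm
      -- decompose y
      have hle1 : (⨆ (j : {i // ¬ f i ≤ A}) (_ : j ≠ i), f j.1) ≤
          ⨆ (l : Fin k) (_ : (¬ f l ≤ A) ∧ l ≠ i.1), f l := by
        refine iSup₂_le fun j hj =>
          le_iSup₂ (f := fun (l : Fin k) (_ : (¬ f l ≤ A) ∧ l ≠ i.1) => f l)
          j.1 ⟨j.2, fun hh => hj (Subtype.ext hh)⟩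
      have hy' : y ∈ ⨆ (l : Fin k) (_ : (¬ f l ≤ A) ∧ l ≠ i.1), f l := hle1 hy
      obtain ⟨w, hw, hw0, hwsum⟩ :=
        mem_biSup_sum (pred := fun l => (¬ f l ≤ A) ∧ l ≠ i.1) f hy'
      set c : Fin k → X := fun l => (if l = i.1 then x else 0) - w l with hc
      have hcm : ∀ l, c l ∈ f l := by
        intro l
        by_cases hl : l = i.1
        · rw [hc]; simp only [if_pos hl]
          rw [hl]
          exact sub_mem hx (hl ▸ hw l)
        · rw [hc]; simp only [if_neg hl, zero_sub]
          exact neg_mem (hw l)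
      have hcz : ∀ l, f l ≤ A → c l = 0 := by
        intro l hl
        have hlne : l ≠ i.1 := fun h => i.2 (h ▸ hl)
        have hwl : w l = 0 := hw0 l (by simp [hl])
        rw [hc]; simp [if_neg hlne, hwl]
      have hcsum : ∑ l, c l = x - y := by
        rw [hc, Finset.sum_sub_distrib, hwsum]
        congr 1
        simp [Finset.sum_ite_eq']
      have hZ := Z c hcm hcz (by rw [hcsum]; exact hxy)
      rw [hcsum] at hZ
      have hxy' : x = y := by rwa [sub_eq_zero] at hZ
      have hle2 : (⨆ (l : Fin k) (_ : (¬ f l ≤ A) ∧ l ≠ i.1), f l) ≤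
          ⨆ (l : Fin k) (_ : l ≠ i.1), f l := by
        refine iSup₂_le fun l hl => le_iSup₂ (f := fun (l : Fin k) (_ : l ≠ i.1) => f l) l hl.2
      have hymem : x ∈ ⨆ (l : Fin k) (_ : l ≠ i.1), f l := by
        rw [hxy']; exact hle2 hy'
      have hx0 : x = 0 := (Submodule.disjoint_def.1 (iSupIndep_def.1 hind i.1)) x hx hymem
      rw [← hξx, hx0, map_zero]
    -- count
    have hcards : Fintype.card {i // f i ≤ A} + Fintype.card {i // ¬ f i ≤ A} = k := by
      rw [Fintype.card_subtype, Fintype.card_subtype]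
      simpa using Finset.card_filter_add_card_filter_not
        (s := (univ : Finset (Fin k))) (p := fun i => f i ≤ A)
    calc (k : ℕ∞) = (Fintype.card {i // f i ≤ A} : ℕ∞)
          + (Fintype.card {i // ¬ f i ≤ A} : ℕ∞) := by
          rw [← Nat.cast_add, hcards]
      _ ≤ goldieDim R A + goldieDim R (X ⧸ A) :=
          add_le_add (le_goldieDim_of_fam _ hg0 hgind) (le_goldieDim_of_fam _ hh0 hhind)

end Key

section GD2
variable {R : Type*} [Ring R] {M N : Type*} [AddCommGroup M] [Module R M]
  [AddCommGroup N] [Module R N]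

lemma goldieDim_le_of_injective (f : M →ₗ[R] N) (hf : Injective f) :
    goldieDim R M ≤ goldieDim R N := by
  refine goldieDim_le _ fun n g h0 hind => ?_
  have hcard : (Fintype.card (Fin n) : ℕ∞) ≤ goldieDim R N := by
    refine le_goldieDim_of_fam (fun i => (g i).map f) (fun i => ?_) ?_
    · obtain ⟨x, hx, hx0⟩ := (g i).ne_bot_iff.1 (h0 i)
      refine (Submodule.ne_bot_iff _).2 ⟨f x, Submodule.mem_map_of_mem hx, fun h => hx0 ?_⟩
      exact hf (by simpa using h)
    · rw [iSupIndep_def]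
      intro i
      rw [Submodule.disjoint_def]
      intro x hx1 hx2
      have h2 : x ∈ ((⨆ (j) (_ : j ≠ i), g j).map f) := by
        have heq : ((⨆ (j) (_ : j ≠ i), g j).map f) = ⨆ (j) (_ : j ≠ i), (g j).map f := by
          rw [Submodule.map_iSup]
          exact iSup_congr fun j => Submodule.map_iSup _ _
        rw [heq]; exact hx2
      obtain ⟨a, ha, rfl⟩ := hx1
      obtain ⟨b, hb, hab⟩ := h2
      have : b = a := hf hab
      subst this
      rw [(Submodule.disjoint_def.1 (iSupIndep_def.1 hind i)) b ha hb, map_zero]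
  simpa using hcard

lemma goldieDim_congr (e : M ≃ₗ[R] N) : goldieDim R M = goldieDim R N :=
  le_antisymm (goldieDim_le_of_injective e.toLinearMap e.injective)
    (goldieDim_le_of_injective e.symm.toLinearMap e.symm.injective)

lemma goldieDim_le_sgoldieDim_of_surjective (f : M →ₗ[R] N) (hf : Surjective f) :
    goldieDim R N ≤ sgoldieDim R M := by
  have := goldieDim_congr (f.quotKerEquivOfSurjective hf)
  rw [← this]
  exact le_iSup (fun K : Submodule R M => goldieDim R (M ⧸ K)) (LinearMap.ker f)

lemma goldieDim_le_sgoldieDim : goldieDim R M ≤ sgoldieDim R M :=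
  goldieDim_le_sgoldieDim_of_surjective (LinearMap.id) surjective_id

lemma sgoldieDim_le_of_surjective (f : M →ₗ[R] N) (hf : Surjective f) :
    sgoldieDim R N ≤ sgoldieDim R M := by
  refine iSup_le fun K => ?_
  exact goldieDim_le_sgoldieDim_of_surjective (K.mkQ.comp f)
    ((Submodule.mkQ_surjective K).comp hf)

lemma sgoldieDim_congr (e : M ≃ₗ[R] N) : sgoldieDim R M = sgoldieDim R N :=
  le_antisymm (sgoldieDim_le_of_surjective e.symm.toLinearMap e.symm.surjective)
    (sgoldieDim_le_of_surjective e.toLinearMap e.surjective)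

lemma goldieDim_subsingleton [Subsingleton M] : goldieDim R M = 0 := by
  refine le_antisymm (goldieDim_le _ fun n f h0 hind => ?_) zero_le
  match n, f, h0 with
  | 0, f, h0 => simp
  | (n+1), f, h0 =>
    exact absurd (Subsingleton.elim (f 0) ⊥) (h0 0)

lemma sgoldieDim_subsingleton [Subsingleton M] : sgoldieDim R M = 0 := by
  refine le_antisymm (iSup_le fun K => ?_) zero_le
  haveI : Subsingleton (M ⧸ K) := (Submodule.mkQ_surjective K).subsingleton
  rw [goldieDim_subsingleton]

end GD2

section Prod
variable {R : Type*} [Ring R] {P Q : Type*} [AddCommGroup P] [Module R P]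
  [AddCommGroup Q] [Module R Q]

lemma map_ne_bot_of_injective {f : P →ₗ[R] Q} (hf : Injective f) {p : Submodule R P}
    (hp : p ≠ ⊥) : p.map f ≠ ⊥ := by
  obtain ⟨x, hx, hx0⟩ := p.ne_bot_iff.1 hp
  refine (Submodule.ne_bot_iff _).2 ⟨f x, Submodule.mem_map_of_mem hx, fun h => hx0 ?_⟩
  exact hf (by simpa using h)

lemma goldieDim_add_le_prod :
    goldieDim R P + goldieDim R Q ≤ goldieDim R (P × Q) := by
  classical
  have hPle : goldieDim R P ≤ goldieDim R (P × Q) :=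
    goldieDim_le_of_injective (LinearMap.inl R P Q) LinearMap.inl_injective
  have hQle : goldieDim R Q ≤ goldieDim R (P × Q) :=
    goldieDim_le_of_injective (LinearMap.inr R P Q) LinearMap.inr_injective
  refine ENat.iSup_add_iSup_le fun n m => ?_
  by_cases hn : ∃ f : Fin n → Submodule R P, (∀ i, f i ≠ ⊥) ∧ iSupIndep f
  · by_cases hm : ∃ f : Fin m → Submodule R Q, (∀ i, f i ≠ ⊥) ∧ iSupIndep f
    · rw [iSup_pos hn, iSup_pos hm]
      obtain ⟨g, hg0, hgind⟩ := hn
      obtain ⟨h, hh0, hhind⟩ := hm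
      set F : Fin n ⊕ Fin m → Submodule R (P × Q) :=
        Sum.elim (fun i => (g i).map (LinearMap.inl R P Q))
          (fun j => (h j).map (LinearMap.inr R P Q)) with hF
      have hF0 : ∀ i, F i ≠ ⊥ := by
        rintro (i | j)
        · exact map_ne_bot_of_injective LinearMap.inl_injective (hg0 i)
        · exact map_ne_bot_of_injective LinearMap.inr_injective (hh0 j)
      have hFind : iSupIndep F := by
        rw [iSupIndep_def]
        intro i
        rw [Submodule.disjoint_def]
        intro x hx1 hx2
        obtain ⟨w, hw, hw0, hwsum⟩ := mem_biSup_sum (pred := fun j => j ≠ i) F hx2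
        have hfst : ∀ j' : Fin n, (w (Sum.inl j')).1 ∈ g j' := by
          intro j'
          obtain ⟨y, hy, hyx⟩ := hw (Sum.inl j')
          rw [← hyx]; exact hy
        have hfst0 : ∀ j' : Fin n, (w (Sum.inl j')).2 = 0 := by
          intro j'
          obtain ⟨y, hy, hyx⟩ := hw (Sum.inl j')
          rw [← hyx]; rfl
        have hsnd : ∀ j' : Fin m, (w (Sum.inr j')).2 ∈ h j' := by
          intro j'
          obtain ⟨y, hy, hyx⟩ := hw (Sum.inr j')
          rw [← hyx]; exact hy
        have hsnd0 : ∀ j' : Fin m, (w (Sum.inr j')).1 = 0 := by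
          intro j'
          obtain ⟨y, hy, hyx⟩ := hw (Sum.inr j')
          rw [← hyx]; rfl
        rcases i with i' | i'
        · obtain ⟨p₀, hp₀, hpx⟩ := hx1
          have hx2' : x.2 = 0 := by rw [← hpx]; rfl
          have hx1' : x.1 ∈ g i' := by rw [← hpx]; exact hp₀
          have hsum1 : x.1 = ∑ j' : Fin n, (w (Sum.inl j')).1 := by
            rw [← hwsum, Prod.fst_sum, Fintype.sum_sum_type]
            simp [hsnd0]
          have hmem : x.1 ∈ ⨆ (j') (_ : j' ≠ i'), g j' := by
            rw [hsum1]
            refine sum_mem_biSup_ne hfst i' ?_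
            have := hw0 (Sum.inl i') (not_not_intro rfl)
            rw [this]; rfl
          have h1 : x.1 = 0 :=
            (Submodule.disjoint_def.1 (iSupIndep_def.1 hgind i')) _ hx1' hmem
          exact Prod.ext h1 hx2'
        · obtain ⟨q₀, hq₀, hqx⟩ := hx1
          have hx1' : x.1 = 0 := by rw [← hqx]; rfl
          have hx2' : x.2 ∈ h i' := by rw [← hqx]; exact hq₀
          have hsum2 : x.2 = ∑ j' : Fin m, (w (Sum.inr j')).2 := by
            rw [← hwsum, Prod.snd_sum, Fintype.sum_sum_type]
            simp [hfst0]
          have hmem : x.2 ∈ ⨆ (j') (_ : j' ≠ i'), h j' := by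
            rw [hsum2]
            refine sum_mem_biSup_ne hsnd i' ?_
            have := hw0 (Sum.inr i') (not_not_intro rfl)
            rw [this]; rfl
          have h2 : x.2 = 0 :=
            (Submodule.disjoint_def.1 (iSupIndep_def.1 hhind i')) _ hx2' hmem
          exact Prod.ext hx1' h2
      have := le_goldieDim_of_fam F hF0 hFind
      rw [Fintype.card_sum, Fintype.card_fin, Fintype.card_fin] at this
      calc ((n : ℕ∞)) + (m : ℕ∞) = ((n + m : ℕ) : ℕ∞) := by rw [Nat.cast_add]
        _ ≤ goldieDim R (P × Q) := this
    · rw [iSup_neg hm, bot_eq_zero', add_zero]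
      exact le_trans (le_iSup_of_le n le_rfl) hPle
  · rw [iSup_neg hn, bot_eq_zero', zero_add]
    exact le_trans (le_iSup_of_le m le_rfl) hQle

lemma sgoldieDim_prod :
    sgoldieDim R (P × Q) = sgoldieDim R P + sgoldieDim R Q := by
  refine le_antisymm ?_ ?_
  · refine iSup_le fun K => ?_
    set A' : Submodule R ((P × Q) ⧸ K) := LinearMap.range (K.mkQ ∘ₗ LinearMap.inl R P Q) with hA'
    have h1 : goldieDim R ((P × Q) ⧸ K) ≤ goldieDim R A' + goldieDim R (((P × Q) ⧸ K) ⧸ A') :=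
      goldieDim_le_add_quot A'
    have h2 : goldieDim R A' ≤ sgoldieDim R P :=
      goldieDim_le_sgoldieDim_of_surjective
        (K.mkQ ∘ₗ LinearMap.inl R P Q).rangeRestrict
        (LinearMap.surjective_rangeRestrict _)
    have h3 : goldieDim R (((P × Q) ⧸ K) ⧸ A') ≤ sgoldieDim R Q := by
      refine goldieDim_le_sgoldieDim_of_surjective
        (A'.mkQ ∘ₗ K.mkQ ∘ₗ LinearMap.inr R P Q) ?_
      intro ξ
      obtain ⟨z, rfl⟩ := A'.mkQ_surjective ξ
      obtain ⟨⟨p, q⟩, rfl⟩ := K.mkQ_surjective z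
      refine ⟨q, ?_⟩
      have hmem : K.mkQ ((p, q) - ((0 : P), q)) ∈ A' := by
        refine ⟨p, ?_⟩
        simp only [LinearMap.coe_comp, Function.comp_apply, LinearMap.inl_apply]
        congr 1
        simp [Prod.ext_iff]
      have : A'.mkQ (K.mkQ (p, q) - K.mkQ (0, q)) = 0 := by
        rw [← map_sub K.mkQ]
        exact (Submodule.Quotient.mk_eq_zero A').2 (by simpa using hmem)
      simp only [LinearMap.coe_comp, Function.comp_apply, LinearMap.inr_apply]
      rw [map_sub] at this
      have := sub_eq_zero.1 this
      exact this.symm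
    exact le_trans h1 (add_le_add h2 h3)
  · refine ENat.iSup_add_iSup_le fun K₁ K₂ => ?_
    have hsurj : Surjective (LinearMap.prodMap K₁.mkQ K₂.mkQ) := by
      have : ⇑(LinearMap.prodMap K₁.mkQ K₂.mkQ) = Prod.map K₁.mkQ K₂.mkQ := rfl
      rw [this]
      exact (K₁.mkQ_surjective).prodMap (K₂.mkQ_surjective)
    exact le_trans goldieDim_add_le_prod
      (goldieDim_le_sgoldieDim_of_surjective _ hsurj)

end Prod

/-- The linear equivalence splitting off the first coordinate of a finite pi type. -/
def finSuccPiLEquiv (R : Type*) [Ring R] {n : ℕ} (M : Fin (n + 1) → Type*)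
    [∀ i, AddCommGroup (M i)] [∀ i, Module R (M i)] :
    (∀ i, M i) ≃ₗ[R] M 0 × (∀ i : Fin n, M i.succ) where
  toFun x := (x 0, fun i => x i.succ)
  invFun p := Fin.cons p.1 p.2
  map_add' x y := rfl
  map_smul' r x := rfl
  left_inv x := by
    funext i
    refine Fin.cases ?_ (fun j => ?_) i
    · simp
    · simp
  right_inv p := by
    refine Prod.ext ?_ ?_
    · simp
    · funext i; simp

universe v

lemma sgoldieDim_pi {R : Type*} [Ring R] : ∀ {n : ℕ} (M : Fin n → Type v)
    [∀ i, AddCommGroup (M i)] [∀ i, Module R (M i)],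
    sgoldieDim R (∀ i, M i) = ∑ i, sgoldieDim R (M i) := by
  intro n
  induction n with
  | zero =>
    intro M _ _
    haveI : Subsingleton (∀ i, M i) := ⟨fun a b => funext fun i => Fin.elim0 i⟩
    rw [sgoldieDim_subsingleton]
    simp
  | succ n ih =>
    intro M _ _
    rw [sgoldieDim_congr (finSuccPiLEquiv R M), sgoldieDim_prod,
      ih (fun i => M i.succ), Fin.sum_univ_succ]

open DirectSum in
/-- SG.dim(M₁ ⊕ ⋯ ⊕ Mₙ) = SG.dim M₁ + ⋯ + SG.dim Mₙ. -/
theorem sgoldieDim_directSum {R : Type*} [Ring R] {n : ℕ} (M : Fin n → Type*)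
    [∀ i, AddCommGroup (M i)] [∀ i, Module R (M i)] :
    sgoldieDim R (⨁ i, M i) = ∑ i, sgoldieDim R (M i) := by
  rw [sgoldieDim_congr (DirectSum.linearEquivFunOnFintype R (Fin n) M)]
  exact sgoldieDim_pi M
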